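/- Let A be a discrete small category, let F, G : A ⥤ B be two functors into a small category B, and let Q : B ⥤ Q be the coequalizer of F and G in Cat. Then Q reflects isomorphisms: for every morphism f of B, if Q(f) is an isomorphism in Q, then f is an isomorphism in B. -/

import Mathlib

/-!
A small category `C` acts on its reduced words (sequences of non-identity arrows, no two
consecutive ones composable) by right multiplication: `w · f` composes `f` into the last letter
when they are composable, then deletes the letter if it has become an identity. This is a functor
from `C` to a one-object category, and it reflects isomorphisms: if `· f` is bijective, the word
sent to the empty word exhibits a section `g` of `f`, and then `· (f ≫ g)` is the identity, which
forces `f ≫ g = 𝟙`. As `A` is discrete, `F` and `G` differ only on objects, which a one-object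
category does not see; so the functor factors through the coequalizer, and the projection onto
the coequalizer reflects isomorphisms as well.
-/

open CategoryTheory Limits

universe u

namespace CategoryTheory

variable {C : Type*} [Category C]

def IsIdentity {X Y : C} (f : X ⟶ Y) : Prop := ∃ h : X = Y, f = eqToHom h

lemma isIdentity_id (X : C) : IsIdentity (𝟙 X) := ⟨rfl, rfl⟩

lemma IsIdentity.exists_comp_eq_id {X Y : C} {f : X ⟶ Y} (hf : IsIdentity f) :
    ∃ g : Y ⟶ X, g ≫ f = 𝟙 Y := by
  obtain ⟨rfl, rfl⟩ := hf
  exact ⟨𝟙 X, Category.id_comp _⟩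

lemma Functor.ext_of_forall_isIdentity {A W : Type*} [Category A] [Category W]
    (hA : ∀ (X Y : A) (f : X ⟶ Y), IsIdentity f) {H K : A ⥤ W}
    (h : ∀ a, H.obj a = K.obj a) : H = K :=
  Functor.ext h fun X Y f => by
    obtain ⟨rfl, rfl⟩ := hA X Y f
    simp

universe w in
instance AsSmall.reflectsIsomorphisms_up {D : Type*} [Category D] :
    (AsSmall.up : D ⥤ AsSmall.{w} D).ReflectsIsomorphisms :=
  inferInstanceAs ((AsSmall.equiv : D ≌ AsSmall.{w} D).functor.ReflectsIsomorphisms)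

lemma Cat.reflectsIsomorphisms_of_comp_eq {B D W : Cat} {π : B ⟶ D} {m : D ⟶ W} {T : B ⟶ W}
    (h : π ≫ m = T) [T.toFunctor.ReflectsIsomorphisms] : π.toFunctor.ReflectsIsomorphisms := by
  subst h
  have : (π.toFunctor ⋙ m.toFunctor).ReflectsIsomorphisms :=
    ‹(π ≫ m).toFunctor.ReflectsIsomorphisms›
  exact reflectsIsomorphisms_of_comp _ m.toFunctor

namespace ArrowWord

open Classical

noncomputable section

def consNonId {X Y : C} (f : X ⟶ Y) (w : List (Arrow C)) : List (Arrow C) :=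
  if IsIdentity f then w else Arrow.mk f :: w

-- The word `[aₙ, …, a₁]` stands for `a₁ ≫ ⋯ ≫ aₙ`, so `push f` is right multiplication by `f`.
def push {X Y : C} (f : X ⟶ Y) : List (Arrow C) → List (Arrow C)
  | a :: w => if h : a.right = X then consNonId (a.hom ≫ eqToHom h ≫ f) w else consNonId f (a :: w)
  | [] => consNonId f []

lemma push_cons_of_eq {X Y : C} (f : X ⟶ Y) {a : Arrow C} (h : a.right = X) (w : List (Arrow C)) :
    push f (a :: w) = consNonId (a.hom ≫ eqToHom h ≫ f) w :=
  dif_pos h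

lemma push_cons_of_ne {X Y : C} (f : X ⟶ Y) {a : Arrow C} (h : a.right ≠ X) (w : List (Arrow C)) :
    push f (a :: w) = consNonId f (a :: w) :=
  dif_neg h

lemma push_nil {X Y : C} (f : X ⟶ Y) : push f [] = consNonId f [] := rfl

def IsReduced : List (Arrow C) → Prop
  | [] => True
  | a :: w => ¬IsIdentity a.hom ∧ (∀ b ∈ w.head?, b.right ≠ a.left) ∧ IsReduced w

lemma consNonId_eq_nil {X Y : C} {f : X ⟶ Y} {w : List (Arrow C)} :
    consNonId f w = [] ↔ IsIdentity f ∧ w = [] := by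
  unfold consNonId
  split_ifs with hf <;> simp [hf]

lemma isReduced_consNonId {X Y : C} (f : X ⟶ Y) {w : List (Arrow C)} (hw : IsReduced w)
    (hX : ∀ b ∈ w.head?, b.right ≠ X) : IsReduced (consNonId f w) := by
  unfold consNonId
  split_ifs with hf
  · exact hw
  · exact ⟨hf, hX, hw⟩

lemma IsReduced.push {w : List (Arrow C)} (hw : IsReduced w) {X Y : C} (f : X ⟶ Y) :
    IsReduced (push f w) := by
  match w, hw with
  | a :: w, hw'@⟨_, ha, hw⟩ =>
    by_cases h : a.right = X
    · rw [push_cons_of_eq _ h]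
      exact isReduced_consNonId _ hw ha
    · rw [push_cons_of_ne _ h]
      exact isReduced_consNonId _ hw' (by simpa using h)
  | [], _ => exact isReduced_consNonId _ trivial (by simp)

lemma push_consNonId {P Y Z : C} (f : P ⟶ Y) (g : Y ⟶ Z) {w : List (Arrow C)}
    (hP : ∀ b ∈ w.head?, b.right ≠ P) : push g (consNonId f w) = consNonId (f ≫ g) w := by
  by_cases hf : IsIdentity f
  · obtain ⟨rfl, rfl⟩ := hf
    rw [consNonId, if_pos ⟨rfl, rfl⟩, eqToHom_refl, Category.id_comp]
    match w with
    | a :: w => exact push_cons_of_ne g (hP a rfl) w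
    | [] => rfl
  · rw [consNonId, if_neg hf, push_cons_of_eq g rfl]
    simp

lemma push_id {w : List (Arrow C)} (hw : IsReduced w) (X : C) : push (𝟙 X) w = w := by
  match w, hw with
  | a :: w, ⟨ha, _, _⟩ =>
    by_cases h : a.right = X
    · subst h
      simp [push_cons_of_eq, consNonId, ha]
    · simp [push_cons_of_ne _ h, consNonId, isIdentity_id]
  | [], _ => simp [push_nil, consNonId, isIdentity_id]

lemma push_comp {w : List (Arrow C)} (hw : IsReduced w) {X Y Z : C} (f : X ⟶ Y) (g : Y ⟶ Z) :
    push (f ≫ g) w = push g (push f w) := by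
  match w, hw with
  | a :: w, ⟨_, ha, _⟩ =>
    by_cases h : a.right = X
    · rw [push_cons_of_eq _ h, push_cons_of_eq _ h, push_consNonId _ _ ha]
      simp
    · rw [push_cons_of_ne _ h, push_cons_of_ne _ h,
        push_consNonId f g (w := a :: w) (by simpa using h)]
  | [], _ => rw [push_nil, push_nil, push_consNonId _ _ (by simp)]

lemma exists_comp_eq_id_of_push_eq_nil {X Y : C} {f : X ⟶ Y} {w : List (Arrow C)}
    (h : push f w = []) : ∃ g : Y ⟶ X, g ≫ f = 𝟙 Y := by
  match w with
  | a :: w =>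
    by_cases ha : a.right = X
    · rw [push_cons_of_eq _ ha] at h
      obtain ⟨⟨hl, hid⟩, -⟩ := consNonId_eq_nil.mp h
      exact ⟨eqToHom hl.symm ≫ a.hom ≫ eqToHom ha, by simp [hid]⟩
    · simp [push_cons_of_ne _ ha, consNonId_eq_nil] at h
  | [] => exact (consNonId_eq_nil.mp h).1.exists_comp_eq_id

abbrev ReducedWord (C : Type*) [Category C] := {w : List (Arrow C) // IsReduced w}

variable (C) in
def wordAction : C ⥤ SingleObj (Function.End (ReducedWord C)) where
  obj _ := SingleObj.star _
  map f w := ⟨push f w.1, w.2.push f⟩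
  map_id X := funext fun w => Subtype.ext (push_id w.2 X)
  map_comp f g := funext fun w => Subtype.ext (push_comp w.2 f g)

lemma eq_id_of_wordAction_map_eq_id {X : C} {f : X ⟶ X} (h : (wordAction C).map f = 𝟙 _) :
    f = 𝟙 X := by
  obtain ⟨⟨_, hf⟩, -⟩ := consNonId_eq_nil.mp (congrArg Subtype.val (congrFun h ⟨[], trivial⟩))
  exact hf

lemma exists_comp_eq_id_of_isIso_wordAction_map {X Y : C} (f : X ⟶ Y)
    [IsIso ((wordAction C).map f)] : ∃ g : Y ⟶ X, g ≫ f = 𝟙 Y :=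
  exists_comp_eq_id_of_push_eq_nil
    (congrArg Subtype.val (congrFun (IsIso.inv_hom_id ((wordAction C).map f)) ⟨[], trivial⟩))

instance : (wordAction C).ReflectsIsomorphisms where
  reflects {X Y} f _ := by
    obtain ⟨g, hgf⟩ := exists_comp_eq_id_of_isIso_wordAction_map f
    have hg : (wordAction C).map g = inv ((wordAction C).map f) :=
      IsIso.eq_inv_of_inv_hom_id (by rw [← Functor.map_comp, hgf, Functor.map_id])
    have hfg : f ≫ g = 𝟙 X :=
      eq_id_of_wordAction_map_eq_id (by rw [Functor.map_comp, hg, IsIso.hom_inv_id])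
    exact ⟨g, hfg, hgf⟩

end

end ArrowWord

end CategoryTheory

open CategoryTheory.ArrowWord in
/-- The coequalizer, in the category `Cat` of small categories, of two functors defined
on a discrete category reflects isomorphisms. -/
theorem coequalizer_of_discrete_reflectsIsomorphisms
    (A B : Cat.{u, u})
    (hA : ∀ (X Y : A) (f : X ⟶ Y), ∃ h : X = Y, f = eqToHom h)
    (F G : A ⟶ B) (c : Cofork F G) (hc : IsColimit c) :
    ∀ {X Y : B} (f : X ⟶ Y), IsIso (c.π.toFunctor.map f) → IsIso f := by
  intro X Y f _
  let T : B ⟶ Cat.of (AsSmall.{u} (SingleObj (Function.End (ReducedWord B)))) :=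
    (wordAction B ⋙ AsSmall.up).toCatHom
  have : T.toFunctor.ReflectsIsomorphisms :=
    inferInstanceAs (wordAction B ⋙ AsSmall.up).ReflectsIsomorphisms
  have hT : F ≫ T = G ≫ T := Cat.ext (Functor.ext_of_forall_isIdentity hA fun _ => rfl)
  have := Cat.reflectsIsomorphisms_of_comp_eq (Cofork.IsColimit.π_desc' hc T hT)
  exact isIso_of_reflects_iso f c.π.toFunctor
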